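/- arXiv:cs/0512086 — 6 statements merged into one kernel-verified Lean document; each statement's English description precedes it below -/
import Mathlib

section
/- In a Cartesian closed category with an initial object f and a contravariant involutive negation functor sending t to f (so that Hom(A,B) ≅ Hom(¬(A⇒B), f) naturally), every hom-set Hom(A,B) has at most one element; i.e., the category is a preorder. -/
/-!
In a cartesian closed category the initial object is strict: `X × -` is a left adjoint, so
`X × ⊥ ≅ ⊥`, and a map `X ⟶ ⊥` is then a split epi that is also mono (via the projection
`X × ⊥ ⟶ ⊥`), hence an isomorphism. So `Hom(X, ⊥)` has at most one element for every `X`,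
and the natural bijection `Hom(A, B) ≃ Hom(N(A ⇒ B), ⊥)` transports this to every hom-set.
-/

open CategoryTheory CategoryTheory.Limits CategoryTheory.MonoidalCategory

theorem subsingleton_hom_to_initial_of_monoidalClosed {C : Type*} [Category C]
    [CartesianMonoidalCategory C] [MonoidalClosed C] [HasInitial C] (X : C) :
    Subsingleton (X ⟶ ⊥_ C) :=
  haveI : HasStrictInitialObjects C :=
    hasStrictInitialObjects_of_initial_is_strict fun _ _ => inferInstance
  initial.subsingleton_to

theorem stmt0_general {C : Type*} [Category C] [CartesianMonoidalCategory C] [MonoidalClosed C]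
    [HasInitial C]
    (N : Cᵒᵖ ⥤ C)
    (e : ∀ A B : C, (A ⟶ B) ≃ (N.obj (Opposite.op ((ihom A).obj B)) ⟶ ⊥_ C)) :
    ∀ A B : C, Subsingleton (A ⟶ B) := fun A B =>
  haveI := subsingleton_hom_to_initial_of_monoidalClosed (N.obj (Opposite.op ((ihom A).obj B)))
  (e A B).subsingleton

/-- Joyal's collapse: a cartesian closed category with an initial object `⊥`,
a contravariant involutive negation functor `N` sending the terminal object
(the monoidal unit of the cartesian structure) to `⊥`, together with a natural
bijection `Hom(A,B) ≅ Hom(N(A⇒B), ⊥)`, is a preorder: every hom-set has at most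
one element. -/
theorem stmt0 {C : Type*} [Category C] [CartesianMonoidalCategory C] [MonoidalClosed C]
    [HasInitial C]
    (N : Cᵒᵖ ⥤ C)
    (invol : 𝟭 C ≅ N.rightOp ⋙ N)
    (Nt : N.obj (Opposite.op (𝟙_ C)) ≅ ⊥_ C)
    (e : ∀ A B : C, (A ⟶ B) ≃ (N.obj (Opposite.op ((ihom A).obj B)) ⟶ ⊥_ C))
    (e_nat : ∀ {A B B' : C} (f : A ⟶ B) (g : B ⟶ B'),
      e A B' (f ≫ g) = N.map ((ihom A).map g).op ≫ e A B f) :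
    ∀ A B : C, Subsingleton (A ⟶ B) :=
  stmt0_general N e
end

section
/- In a symmetric monoidal category where every object carries a cocommutative comonoid structure with Π_t = id_t, the following are equivalent: (i) ρ_t ∘ (Π_A ∧ Π_B) = Π_{A∧B} for all A, B; (ii) Π_{t∧t} = ρ_t and the class of maps preserving the counit is closed under ∧. -/
open CategoryTheory CategoryTheory.MonoidalCategory

section Counit

variable {C : Type*} [Category C] [MonoidalCategory C] (Pi : ∀ A : C, A ⟶ 𝟙_ C)

lemma tensorHom_comp_counit_of_counit_tensor
    (hPi : ∀ A B : C, (Pi A ⊗ₘ Pi B) ≫ (ρ_ (𝟙_ C)).hom = Pi (A ⊗ B))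
    {A A' B B' : C} {f : A ⟶ A'} {g : B ⟶ B'}
    (hf : f ≫ Pi A' = Pi A) (hg : g ≫ Pi B' = Pi B) :
    (f ⊗ₘ g) ≫ Pi (A' ⊗ B') = Pi (A ⊗ B) := by
  rw [← hPi, ← hPi A B, ← hf, ← hg, ← Category.assoc, tensorHom_comp_tensorHom]

lemma counit_unit_tensor_unit_of_counit_tensor (hunit : Pi (𝟙_ C) = 𝟙 (𝟙_ C))
    (hPi : ∀ A B : C, (Pi A ⊗ₘ Pi B) ≫ (ρ_ (𝟙_ C)).hom = Pi (A ⊗ B)) :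
    Pi (𝟙_ C ⊗ 𝟙_ C) = (ρ_ (𝟙_ C)).hom := by
  rw [← hPi, hunit, id_tensorHom_id, Category.id_comp]

lemma counit_comp_counit_unit (hunit : Pi (𝟙_ C) = 𝟙 (𝟙_ C)) (A : C) :
    Pi A ≫ Pi (𝟙_ C) = Pi A := by
  rw [hunit, Category.comp_id]

end Counit

theorem stmt4_general {C : Type*} [Category C] [MonoidalCategory C]
    (Pi : ∀ A : C, A ⟶ 𝟙_ C)
    (B2a : Pi (𝟙_ C) = 𝟙 (𝟙_ C)) :
    (∀ A B : C, (Pi A ⊗ₘ Pi B) ≫ (ρ_ (𝟙_ C)).hom = Pi (A ⊗ B)) ↔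
    (Pi (𝟙_ C ⊗ 𝟙_ C) = (ρ_ (𝟙_ C)).hom ∧
      ∀ {A A' B B' : C} (f : A ⟶ A') (g : B ⟶ B'),
        f ≫ Pi A' = Pi A → g ≫ Pi B' = Pi B →
          (f ⊗ₘ g) ≫ Pi (A' ⊗ B') = Pi (A ⊗ B)) := by
  constructor
  · intro hPi
    exact ⟨counit_unit_tensor_unit_of_counit_tensor Pi B2a hPi,
      fun _ _ hf hg => tensorHom_comp_counit_of_counit_tensor Pi hPi hf hg⟩
  · rintro ⟨hunit_tensor, hclosed⟩ A B
    have h := hclosed (Pi A) (Pi B) (counit_comp_counit_unit Pi B2a A)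
      (counit_comp_counit_unit Pi B2a B)
    rwa [hunit_tensor] at h

/-- In a symmetric monoidal category with cocommutative comonoids `(Δ_A, Π_A)`
on every object satisfying `Π_t = id_t`, the following are equivalent:
(i) `ρ_t ∘ (Π_A ∧ Π_B) = Π_{A∧B}` for all `A B`;
(ii) `Π_{t∧t} = ρ_t` and the maps preserving the counit are closed under `∧`. -/
theorem stmt4 {C : Type*} [Category C] [MonoidalCategory C] [SymmetricCategory C]
    (Δ : ∀ A : C, A ⟶ A ⊗ A) (Pi : ∀ A : C, A ⟶ 𝟙_ C)
    (coassoc : ∀ A : C, Δ A ≫ (Δ A ⊗ₘ 𝟙 A) ≫ (α_ A A A).hom = Δ A ≫ (𝟙 A ⊗ₘ Δ A))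
    (cocomm : ∀ A : C, Δ A ≫ (β_ A A).hom = Δ A)
    (counit_r : ∀ A : C, Δ A ≫ (𝟙 A ⊗ₘ Pi A) ≫ (ρ_ A).hom = 𝟙 A)
    (counit_l : ∀ A : C, Δ A ≫ (Pi A ⊗ₘ 𝟙 A) ≫ (λ_ A).hom = 𝟙 A)
    (B2a : Pi (𝟙_ C) = 𝟙 (𝟙_ C)) :
    (∀ A B : C, (Pi A ⊗ₘ Pi B) ≫ (ρ_ (𝟙_ C)).hom = Pi (A ⊗ B)) ↔
    (Pi (𝟙_ C ⊗ 𝟙_ C) = (ρ_ (𝟙_ C)).hom ∧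
      ∀ {A A' B B' : C} (f : A ⟶ A') (g : B ⟶ B'),
        f ≫ Pi A' = Pi A → g ≫ Pi B' = Pi B →
          (f ⊗ₘ g) ≫ Pi (A' ⊗ B') = Pi (A ⊗ B)) :=
  stmt4_general Pi B2a
end

section
/- Let C be a category with two symmetric monoidal structures (∧, t) and (∨, f), commutative monoids (∇_A : A∨A → A, unit ⊓_A : f → A) on every object for ∨, cocommutative comonoids (Δ_A, Π_A) for ∧, and a natural, self-dual medial map m_{A,B,C,D} : (A∧B)∨(C∧D) → (A∨C)∧(B∨D) satisfying Δ_{A∨B} = m_{A,A,B,B} ∘ (Δ_A ∨ Δ_B). Then maps that preserve the ∧-comultiplication are closed under ∨. -/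
open CategoryTheory CategoryTheory.MonoidalCategory

universe v u

/-- The canonical "middle-exchange" map `(A∧B)∧(X∧Y) ⟶ (A∧X)∧(B∧Y)` for the
`∧`-monoidal structure (i.e. `id ∧ σ ∧ id` up to coherence). -/
def exch {C : Type u} [Category.{v} C] [MonoidalCategory C] [SymmetricCategory C]
    (A B X Y : C) : (A ⊗ B) ⊗ (X ⊗ Y) ⟶ (A ⊗ X) ⊗ (B ⊗ Y) :=
  (α_ A B (X ⊗ Y)).hom ≫ (𝟙 A ⊗ₘ (α_ B X Y).inv) ≫
    (𝟙 A ⊗ₘ ((β_ B X).hom ⊗ₘ 𝟙 Y)) ≫ (𝟙 A ⊗ₘ (α_ X B Y).hom) ≫ (α_ A X (B ⊗ Y)).inv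

/-- A second symmetric monoidal structure (the "disjunction" `∨` with unit `f`)
on a category, given as explicit data with the usual naturality and coherence
axioms of a symmetric monoidal category. -/
structure VStr (C : Type u) [Category.{v} C] where
  vee : C → C → C
  vHom : ∀ {A B X Y : C}, (A ⟶ B) → (X ⟶ Y) → (vee A X ⟶ vee B Y)
  bot : C
  vHom_id : ∀ A B : C, vHom (𝟙 A) (𝟙 B) = 𝟙 (vee A B)
  vHom_comp : ∀ {A B X Y Z W : C} (f : A ⟶ B) (g : B ⟶ X) (h : Y ⟶ Z) (k : Z ⟶ W),
    vHom (f ≫ g) (h ≫ k) = vHom f h ≫ vHom g k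
  vassoc : ∀ A B X : C, vee (vee A B) X ≅ vee A (vee B X)
  vbraid : ∀ A B : C, vee A B ≅ vee B A
  vrunit : ∀ A : C, vee A bot ≅ A
  vlunit : ∀ A : C, vee bot A ≅ A
  vassoc_nat : ∀ {A B X A' B' X' : C} (f : A ⟶ A') (g : B ⟶ B') (h : X ⟶ X'),
    vHom (vHom f g) h ≫ (vassoc A' B' X').hom = (vassoc A B X).hom ≫ vHom f (vHom g h)
  vbraid_nat : ∀ {A B A' B' : C} (f : A ⟶ A') (g : B ⟶ B'),
    vHom f g ≫ (vbraid A' B').hom = (vbraid A B).hom ≫ vHom g f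
  vrunit_nat : ∀ {A A' : C} (f : A ⟶ A'),
    vHom f (𝟙 bot) ≫ (vrunit A').hom = (vrunit A).hom ≫ f
  vlunit_nat : ∀ {A A' : C} (f : A ⟶ A'),
    vHom (𝟙 bot) f ≫ (vlunit A').hom = (vlunit A).hom ≫ f
  vpentagon : ∀ A B X Y : C,
    (vassoc (vee A B) X Y).hom ≫ (vassoc A B (vee X Y)).hom =
      vHom (vassoc A B X).hom (𝟙 Y) ≫ (vassoc A (vee B X) Y).hom ≫
        vHom (𝟙 A) (vassoc B X Y).hom
  vhexagon : ∀ A B X : C,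
    (vassoc A B X).hom ≫ (vbraid A (vee B X)).hom ≫ (vassoc B X A).hom =
      vHom (vbraid A B).hom (𝟙 X) ≫ (vassoc B A X).hom ≫ vHom (𝟙 B) (vbraid A X).hom
  vtriangle : ∀ A B : C,
    (vassoc A bot B).hom ≫ vHom (𝟙 A) (vlunit B).hom = vHom (vrunit A).hom (𝟙 B)
  vsymm : ∀ A B : C, (vbraid A B).hom ≫ (vbraid B A).hom = 𝟙 (vee A B)

namespace VStr

variable {C : Type u} [Category.{v} C] (S : VStr C)

/-- The middle-exchange map `(A∨B)∨(X∨Y) ⟶ (A∨X)∨(B∨Y)` for the `∨`-structure. -/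
def vexch (A B X Y : C) :
    S.vee (S.vee A B) (S.vee X Y) ⟶ S.vee (S.vee A X) (S.vee B Y) :=
  (S.vassoc A B (S.vee X Y)).hom ≫ S.vHom (𝟙 A) (S.vassoc B X Y).inv ≫
    S.vHom (𝟙 A) (S.vHom (S.vbraid B X).hom (𝟙 Y)) ≫
    S.vHom (𝟙 A) (S.vassoc X B Y).hom ≫ (S.vassoc A X (S.vee B Y)).inv

end VStr

/-- A `B2`-category structure (without the `*`-autonomous negation): two
symmetric monoidal structures `∧` (the ambient one) and `∨` (given by a
`VStr`), cocommutative `∧`-comonoids `(Δ, Π)` and commutative `∨`-monoids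
`(∇, ⊓)` on every object, satisfying the axioms B2a, B2c and their duals. -/
structure B2 (C : Type u) [Category.{v} C] [MonoidalCategory C] [SymmetricCategory C]
    extends VStr C where
  Δ : ∀ A : C, A ⟶ A ⊗ A
  Pi : ∀ A : C, A ⟶ 𝟙_ C
  coassoc : ∀ A : C, Δ A ≫ (Δ A ⊗ₘ 𝟙 A) ≫ (α_ A A A).hom = Δ A ≫ (𝟙 A ⊗ₘ Δ A)
  cocomm : ∀ A : C, Δ A ≫ (β_ A A).hom = Δ A
  counit_r : ∀ A : C, Δ A ≫ (𝟙 A ⊗ₘ Pi A) ≫ (ρ_ A).hom = 𝟙 A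
  counit_l : ∀ A : C, Δ A ≫ (Pi A ⊗ₘ 𝟙 A) ≫ (λ_ A).hom = 𝟙 A
  nab : ∀ A : C, vee A A ⟶ A
  cap : ∀ A : C, bot ⟶ A
  vcoassoc : ∀ A : C, (vassoc A A A).hom ≫ vHom (𝟙 A) (nab A) ≫ nab A =
    vHom (nab A) (𝟙 A) ≫ nab A
  vcomm : ∀ A : C, (vbraid A A).hom ≫ nab A = nab A
  vunit_r : ∀ A : C, (vrunit A).inv ≫ vHom (𝟙 A) (cap A) ≫ nab A = 𝟙 A
  vunit_l : ∀ A : C, (vlunit A).inv ≫ vHom (cap A) (𝟙 A) ≫ nab A = 𝟙 A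
  B2a : Pi (𝟙_ C) = 𝟙 (𝟙_ C)
  B2c : ∀ A B : C, Δ (A ⊗ B) = (Δ A ⊗ₘ Δ B) ≫ exch A A B B
  B2a' : cap bot = 𝟙 bot
  B2c' : ∀ A B : C, nab (vee A B) = toVStr.vexch A B A B ≫ vHom (nab A) (nab B)

/-- A `B2`-category with a natural medial map satisfying B3c and its dual B3c'. -/
structure B2M (C : Type u) [Category.{v} C] [MonoidalCategory C] [SymmetricCategory C]
    extends B2 C where
  med : ∀ A B X Y : C, vee (A ⊗ B) (X ⊗ Y) ⟶ (vee A X) ⊗ (vee B Y)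
  med_nat : ∀ {A B X Y A' B' X' Y' : C}
    (f : A ⟶ A') (g : B ⟶ B') (h : X ⟶ X') (k : Y ⟶ Y'),
    vHom (f ⊗ₘ g) (h ⊗ₘ k) ≫ med A' B' X' Y' = med A B X Y ≫ (vHom f h ⊗ₘ vHom g k)
  B3c : ∀ A B : C, Δ (vee A B) = vHom (Δ A) (Δ B) ≫ med A A B B
  B3c' : ∀ A B : C, nab (A ⊗ B) = med A B A B ≫ (nab A ⊗ₘ nab B)

/-- In a `B2`-category with a natural medial map satisfying B3c (and its dual),
the maps that preserve the `∧`-comultiplication are closed under `∨`. -/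
theorem stmt8 {C : Type u} [Category.{v} C] [MonoidalCategory C] [SymmetricCategory C]
    (S : B2M C) :
    ∀ {A A' B B' : C} (f : A ⟶ A') (g : B ⟶ B'),
      f ≫ S.Δ A' = S.Δ A ≫ (f ⊗ₘ f) →
      g ≫ S.Δ B' = S.Δ B ≫ (g ⊗ₘ g) →
      S.vHom f g ≫ S.Δ (S.vee A' B') =
        S.Δ (S.vee A B) ≫ (S.vHom f g ⊗ₘ S.vHom f g) := by
  intro A A' B B' f g hf hg
  calc S.vHom f g ≫ S.Δ (S.vee A' B')
      = S.vHom (f ≫ S.Δ A') (g ≫ S.Δ B') ≫ S.med A' A' B' B' := by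
        rw [S.B3c, S.vHom_comp, Category.assoc]
    _ = S.vHom (S.Δ A) (S.Δ B) ≫ S.vHom (f ⊗ₘ f) (g ⊗ₘ g) ≫ S.med A' A' B' B' := by
        rw [hf, hg, S.vHom_comp, Category.assoc]
    _ = S.Δ (S.vee A B) ≫ (S.vHom f g ⊗ₘ S.vHom f g) := by
        rw [S.med_nat, S.B3c, Category.assoc]
end

section
/- In a B2-category with medial, for all maps f : A → C, g : A → D, h : B → C, k : B → D, the equation [⟨f,g⟩, ⟨h,k⟩] = ⟨[f,h], [g,k]⟩ : A∨B → C∧D holds, where ⟨·,·⟩ is pairing via Δ and [·,·] is copairing via ∇. -/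
open CategoryTheory CategoryTheory.MonoidalCategory

universe v u

namespace B2M

variable {C : Type u} [Category.{v} C] [MonoidalCategory C] [SymmetricCategory C] (S : B2M C)

theorem vHom_tensorHom_comp_nab {A B A' B' X Y : C}
    (f : A ⟶ X) (g : B ⟶ Y) (h : A' ⟶ X) (k : B' ⟶ Y) :
    S.vHom (f ⊗ₘ g) (h ⊗ₘ k) ≫ S.nab (X ⊗ Y) =
      S.med A B A' B' ≫ ((S.vHom f h ≫ S.nab X) ⊗ₘ (S.vHom g k ≫ S.nab Y)) := by
  rw [S.B3c', ← Category.assoc, S.med_nat, Category.assoc, tensorHom_comp_tensorHom]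

end B2M

/-- In a `B2`-category with medial, copairing of pairings equals pairing of
copairings: `[⟨f,g⟩,⟨h,k⟩] = ⟨[f,h],[g,k]⟩ : A∨B ⟶ C∧D`, where
`⟨f,g⟩ = (f∧g)∘Δ` and `[f,h] = ∇∘(f∨h)`. -/
theorem stmt9 {C : Type u} [Category.{v} C] [MonoidalCategory C] [SymmetricCategory C]
    (S : B2M C) :
    ∀ {A B X Y : C} (f : A ⟶ X) (g : A ⟶ Y) (h : B ⟶ X) (k : B ⟶ Y),
      S.vHom (S.Δ A ≫ (f ⊗ₘ g)) (S.Δ B ≫ (h ⊗ₘ k)) ≫ S.nab (X ⊗ Y) =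
        S.Δ (S.vee A B) ≫ ((S.vHom f h ≫ S.nab X) ⊗ₘ (S.vHom g k ≫ S.nab Y)) := by
  intro A B X Y f g h k
  rw [S.vHom_comp, Category.assoc, S.vHom_tensorHom_comp_nab, ← Category.assoc, ← S.B3c]
end

section
/- In a B3-category, the medial map m_{A,B,C,D} is strong: it is both a ∨-monoid morphism and a ∧-comonoid morphism; moreover nm = ∇_t = Π_{t∨t} is strong, and the class of strong maps is closed under ∧ and ∨. -/
open CategoryTheory CategoryTheory.MonoidalCategory

universe v u

/-- A `B3`-category: a `B2`-category with medial, a nullary medial map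
satisfying B3b, its dual, and the axiom B3a (`nm = ∇_t`, dually `nm' = Δ_f`). -/
structure B3 (C : Type u) [Category.{v} C] [MonoidalCategory C] [SymmetricCategory C]
    extends B2M C where
  nm : vee (𝟙_ C) (𝟙_ C) ⟶ 𝟙_ C
  B3b : ∀ A B : C, Pi (vee A B) = vHom (Pi A) (Pi B) ≫ nm
  B3a : nm = nab (𝟙_ C)
  nm' : bot ⟶ bot ⊗ bot
  B3b' : ∀ A B : C, cap (A ⊗ B) = nm' ≫ (cap A ⊗ₘ cap B)
  B3a' : nm' = Δ bot

namespace B3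

variable {C : Type u} [Category.{v} C] [MonoidalCategory C] [SymmetricCategory C]
  (S : B3 C)

/-- A map is *strong* if it is both a `∨`-monoid morphism and a
`∧`-comonoid morphism. -/
def Strong {A B : C} (f : A ⟶ B) : Prop :=
  S.nab A ≫ f = S.vHom f f ≫ S.nab B ∧
  S.cap A ≫ f = S.cap B ∧
  f ≫ S.Pi B = S.Pi A ∧
  f ≫ S.Δ B = S.Δ A ≫ (f ⊗ₘ f)

end B3

/-!
The `∧`-comonoids `(Δ, Π)` of a B3-category form a copy–discard structure on `C`, and so do the
`∨`-monoids `(∇, ⊓)`, read as comonoids in the opposite of the `∨`-monoidal category; a map is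
strong exactly when it is a comonoid morphism ("deterministic") for both. In any copy–discard
structure the deterministic maps are closed under `⊗` and under pairing `Δ ≫ (f ⊗ g)` (by
cocommutativity), and they contain the projections and `Δ`, `Π` themselves. Axioms B3b and B3c say
that `Π` and `Δ` of a `∨` factor through `nm` and `med`, so `∨` preserves `∧`-deterministic maps;
dually for B3b', B3c'. Finally `med` is the pairing of `fst ∨ fst` with `snd ∨ snd` (dually, the
copairing of `inl ⊗ inl` with `inr ⊗ inr`), and `nm = Π_{t∨t} = ∇_t`.
-/

open BraidedCategory Opposite

/- Mathlib's `CopyDiscardCategory` is a class, and its comonoid on `X ⊗ Y` competes with the global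
`ComonObj (X ⊗ Y)` instance; a B3-category carries two such structures, so the data is bundled. -/
structure CopyDiscard (D : Type u) [Category.{v} D] [MonoidalCategory D] [BraidedCategory D] where
  copy (X : D) : X ⟶ X ⊗ X
  discard (X : D) : X ⟶ 𝟙_ D
  copy_assoc (X : D) : copy X ≫ X ◁ copy X = copy X ≫ copy X ▷ X ≫ (α_ X X X).hom
  copy_comm (X : D) : copy X ≫ (β_ X X).hom = copy X
  copy_discard_left (X : D) : copy X ≫ discard X ▷ X = (λ_ X).inv
  copy_discard_right (X : D) : copy X ≫ X ◁ discard X = (ρ_ X).inv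
  discard_unit : discard (𝟙_ D) = 𝟙 (𝟙_ D)
  copy_tensor (X Y : D) : copy (X ⊗ Y) = (copy X ⊗ₘ copy Y) ≫ tensorμ X X Y Y

namespace CopyDiscard

variable {D : Type u} [Category.{v} D] [MonoidalCategory D] [BraidedCategory D] (M : CopyDiscard D)

lemma eq_discard_of_copy {X : D} (e : X ⟶ 𝟙_ D) (h : M.copy X ≫ e ▷ X = (λ_ X).inv) :
    e = M.discard X := by
  have key : M.copy X ≫ (e ⊗ₘ M.discard X) = e ≫ (ρ_ _).inv := by
    rw [tensorHom_def', reassoc_of% M.copy_discard_right, rightUnitor_inv_naturality]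
  rw [MonoidalCategory.tensorHom_def, reassoc_of% h, ← leftUnitor_inv_naturality,
    unitors_inv_equal] at key
  exact ((cancel_mono _).1 key).symm

lemma copy_tensor_comp_tensorHom {X Y X₁ X₂ Y₁ Y₂ : D} (f₁ : X ⟶ X₁) (f₂ : X ⟶ X₂) (g₁ : Y ⟶ Y₁)
    (g₂ : Y ⟶ Y₂) :
    M.copy (X ⊗ Y) ≫ ((f₁ ⊗ₘ g₁) ⊗ₘ (f₂ ⊗ₘ g₂)) =
      ((M.copy X ≫ (f₁ ⊗ₘ f₂)) ⊗ₘ (M.copy Y ≫ (g₁ ⊗ₘ g₂))) ≫ tensorμ X₁ X₂ Y₁ Y₂ := by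
  rw [M.copy_tensor, Category.assoc, ← tensorμ_natural, tensorHom_comp_tensorHom_assoc]

lemma discard_tensor (X Y : D) :
    M.discard (X ⊗ Y) = (M.discard X ⊗ₘ M.discard Y) ≫ (λ_ (𝟙_ D)).hom := by
  refine (M.eq_discard_of_copy _ ?_).symm
  have := M.copy_tensor_comp_tensorHom (M.discard X) (𝟙 X) (M.discard Y) (𝟙 Y)
  simp only [tensorHom_id, id_whiskerRight, M.copy_discard_left] at this
  rw [comp_whiskerRight, reassoc_of% this, tensorμ, braiding_tensorUnit_right]
  monoidal

lemma copy_unit : M.copy (𝟙_ D) = (λ_ (𝟙_ D)).inv := by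
  simpa [M.discard_unit, unitors_inv_equal] using M.copy_discard_right (𝟙_ D)

lemma copy_discard_discard (X : D) :
    M.copy X ≫ (M.discard X ⊗ₘ M.discard X) = M.discard X ≫ (λ_ (𝟙_ D)).inv := by
  rw [tensorHom_def', reassoc_of% M.copy_discard_right, ← rightUnitor_inv_naturality,
    unitors_inv_equal]

lemma copy_assoc_inv (X : D) :
    M.copy X ≫ X ◁ M.copy X ≫ (α_ X X X).inv = M.copy X ≫ M.copy X ▷ X := by
  rw [reassoc_of% M.copy_assoc, Iso.hom_inv_id, Category.comp_id]

lemma copy_tensorHom_copy (X : D) :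
    M.copy X ≫ (M.copy X ⊗ₘ M.copy X) =
      M.copy X ≫ X ◁ (M.copy X ≫ X ◁ M.copy X) ≫ (α_ X X (X ⊗ X)).inv := by
  rw [MonoidalCategory.tensorHom_def, ← reassoc_of% M.copy_assoc_inv,
    ← associator_inv_naturality_right, whiskerLeft_comp]
  simp only [Category.assoc]

/-- Cocommutativity lets the middle two factors of the fourfold copy be swapped. -/
lemma copy_tensorHom_copy_tensorμ (X : D) :
    M.copy X ≫ (M.copy X ⊗ₘ M.copy X) ≫ tensorμ X X X X = M.copy X ≫ (M.copy X ⊗ₘ M.copy X) := by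
  have swap : M.copy X ≫ X ◁ M.copy X ≫ (α_ X X X).inv ≫ (β_ X X).hom ▷ X ≫ (α_ X X X).hom =
      M.copy X ≫ X ◁ M.copy X := by
    rw [reassoc_of% M.copy_assoc_inv, ← comp_whiskerRight_assoc, M.copy_comm, M.copy_assoc]
  rw [reassoc_of% M.copy_tensorHom_copy, M.copy_tensorHom_copy]
  simp only [tensorμ, Iso.inv_hom_id_assoc, ← whiskerLeft_comp_assoc, Category.assoc, swap]

structure Deterministic {X Y : D} (f : X ⟶ Y) : Prop where
  comp_discard : f ≫ M.discard Y = M.discard X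
  comp_copy : f ≫ M.copy Y = M.copy X ≫ (f ⊗ₘ f)

def fst (X Y : D) : X ⊗ Y ⟶ X := X ◁ M.discard Y ≫ (ρ_ X).hom

def snd (X Y : D) : X ⊗ Y ⟶ Y := M.discard X ▷ Y ≫ (λ_ Y).hom

def lift {Z X Y : D} (f : Z ⟶ X) (g : Z ⟶ Y) : Z ⟶ X ⊗ Y := M.copy Z ≫ (f ⊗ₘ g)

lemma lift_fst_snd (X Y : D) : M.lift (M.fst X Y) (M.snd X Y) = 𝟙 (X ⊗ Y) := by
  have := M.copy_tensor_comp_tensorHom (𝟙 X) (M.discard X) (M.discard Y) (𝟙 Y)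
  simp only [tensorHom_id, id_tensorHom, M.copy_discard_left, M.copy_discard_right] at this
  rw [lift, fst, snd, ← tensorHom_comp_tensorHom, reassoc_of% this, tensorμ,
    braiding_tensorUnit_left]
  monoidal

variable {M}

lemma deterministic_id (X : D) : M.Deterministic (𝟙 X) :=
  ⟨Category.id_comp _, by simp⟩

lemma Deterministic.comp {X Y Z : D} {f : X ⟶ Y} {g : Y ⟶ Z} (hf : M.Deterministic f)
    (hg : M.Deterministic g) : M.Deterministic (f ≫ g) where
  comp_discard := by rw [Category.assoc, hg.comp_discard, hf.comp_discard]
  comp_copy := by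
    rw [Category.assoc, hg.comp_copy, reassoc_of% hf.comp_copy, tensorHom_comp_tensorHom]

lemma Deterministic.tensorHom {X Y X' Y' : D} {f : X ⟶ X'} {g : Y ⟶ Y'} (hf : M.Deterministic f)
    (hg : M.Deterministic g) : M.Deterministic (f ⊗ₘ g) where
  comp_discard := by
    rw [M.discard_tensor, M.discard_tensor, tensorHom_comp_tensorHom_assoc, hf.comp_discard,
      hg.comp_discard]
  comp_copy := by
    rw [M.copy_tensor_comp_tensorHom, M.copy_tensor, tensorHom_comp_tensorHom_assoc, hf.comp_copy,
      hg.comp_copy]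

lemma Deterministic.lift {Z X Y : D} {f : Z ⟶ X} {g : Z ⟶ Y} (hf : M.Deterministic f)
    (hg : M.Deterministic g) : M.Deterministic (M.lift f g) where
  comp_discard := by
    rw [CopyDiscard.lift, M.discard_tensor, Category.assoc, tensorHom_comp_tensorHom_assoc,
      hf.comp_discard, hg.comp_discard, reassoc_of% M.copy_discard_discard, Iso.inv_hom_id,
      Category.comp_id]
  comp_copy := by
    rw [CopyDiscard.lift, Category.assoc]
    calc M.copy Z ≫ (f ⊗ₘ g) ≫ M.copy (X ⊗ Y)
        = M.copy Z ≫ ((M.copy Z ≫ (f ⊗ₘ f)) ⊗ₘ (M.copy Z ≫ (g ⊗ₘ g))) ≫ tensorμ X X Y Y := by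
          rw [M.copy_tensor, tensorHom_comp_tensorHom_assoc, hf.comp_copy, hg.comp_copy]
      _ = M.copy Z ≫ (M.copy Z ⊗ₘ M.copy Z) ≫ tensorμ Z Z Z Z ≫ ((f ⊗ₘ g) ⊗ₘ (f ⊗ₘ g)) := by
          rw [← tensorHom_comp_tensorHom_assoc, tensorμ_natural]
      _ = M.copy Z ≫ ((M.copy Z ≫ (f ⊗ₘ g)) ⊗ₘ (M.copy Z ≫ (f ⊗ₘ g))) := by
          rw [reassoc_of% M.copy_tensorHom_copy_tensorμ, tensorHom_comp_tensorHom]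

variable (M)

lemma deterministic_discard (X : D) : M.Deterministic (M.discard X) where
  comp_discard := by rw [M.discard_unit, Category.comp_id]
  comp_copy := by rw [M.copy_unit, M.copy_discard_discard]

lemma deterministic_copy (X : D) : M.Deterministic (M.copy X) := by
  simpa [CopyDiscard.lift] using (deterministic_id X).lift (M := M) (deterministic_id X)

lemma deterministic_rightUnitor (X : D) : M.Deterministic (ρ_ X).hom where
  comp_discard := by
    rw [M.discard_tensor, M.discard_unit, tensorHom_id, unitors_equal, rightUnitor_naturality]
  comp_copy := by
    rw [M.copy_tensor, M.copy_unit, MonoidalCategory.tensorHom_def, Category.assoc,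
      Category.assoc, ← tensor_right_unitality, rightUnitor_naturality]

lemma deterministic_leftUnitor (X : D) : M.Deterministic (λ_ X).hom where
  comp_discard := by
    rw [M.discard_tensor, M.discard_unit, id_tensorHom, leftUnitor_naturality]
  comp_copy := by
    rw [M.copy_tensor, M.copy_unit, MonoidalCategory.tensorHom_def', Category.assoc,
      Category.assoc, ← tensor_left_unitality, leftUnitor_naturality]

lemma deterministic_fst (X Y : D) : M.Deterministic (M.fst X Y) := by
  simpa [fst] using ((deterministic_id X).tensorHom (M.deterministic_discard Y)).comp
    (M.deterministic_rightUnitor X)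

lemma deterministic_snd (X Y : D) : M.Deterministic (M.snd X Y) := by
  simpa [snd] using ((M.deterministic_discard X).tensorHom (deterministic_id Y)).comp
    (M.deterministic_leftUnitor Y)

end CopyDiscard

/- A type synonym, since `C` itself already carries the `∧`-monoidal structure. -/
def VCat {C : Type u} [Category.{v} C] (_ : VStr C) : Type u := C

namespace VCat

variable {C : Type u} [Category.{v} C] (S : VStr C)

instance : Category.{v} (VCat S) := inferInstanceAs (Category.{v} C)

instance : MonoidalCategoryStruct (VCat S) where
  tensorObj := S.vee
  whiskerLeft X _ _ f := S.vHom (𝟙 X) f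
  whiskerRight f Y := S.vHom f (𝟙 Y)
  tensorHom := S.vHom
  tensorUnit := S.bot
  associator := S.vassoc
  leftUnitor := S.vlunit
  rightUnitor := S.vrunit

instance : MonoidalCategory (VCat S) :=
  MonoidalCategory.ofTensorHom (id_tensorHom_id := S.vHom_id)
    (tensorHom_comp_tensorHom := fun f₁ f₂ g₁ g₂ => (S.vHom_comp f₁ g₁ f₂ g₂).symm)
    (associator_naturality := S.vassoc_nat) (leftUnitor_naturality := S.vlunit_nat)
    (rightUnitor_naturality := S.vrunit_nat)
    (pentagon := fun A B X Y => (S.vpentagon A B X Y).symm) (triangle := S.vtriangle)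

def braiding (X Y : VCat S) : X ⊗ Y ≅ Y ⊗ X := S.vbraid X Y

lemma braiding_inv (X Y : VCat S) : (braiding S X Y).inv = (braiding S Y X).hom := by
  rw [← cancel_epi (braiding S X Y).hom, Iso.hom_inv_id]
  exact (S.vsymm X Y).symm

lemma hexagon_reverse (X Y Z : VCat S) :
    (α_ X Y Z).inv ≫ (braiding S (X ⊗ Y) Z).hom ≫ (α_ Z X Y).inv =
      X ◁ (braiding S Y Z).hom ≫ (α_ X Z Y).inv ≫ (braiding S X Z).hom ▷ Y := by
  have h : α_ Z X Y ≪≫ braiding S Z (X ⊗ Y) ≪≫ α_ X Y Z =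
      whiskerRightIso (braiding S Z X) Y ≪≫ α_ X Z Y ≪≫ whiskerLeftIso X (braiding S Z Y) :=
    Iso.ext (S.vhexagon Z X Y)
  simpa [← braiding_inv] using congrArg Iso.inv h

instance : BraidedCategory (VCat S) where
  braiding := braiding S
  braiding_naturality_right X _ _ f := S.vbraid_nat (𝟙 X) f
  braiding_naturality_left f Z := S.vbraid_nat f (𝟙 Z)
  hexagon_forward := S.vhexagon
  hexagon_reverse := hexagon_reverse S

abbrev opHom {A B : C} (f : A ⟶ B) : op (B : VCat S) ⟶ op (A : VCat S) :=
  Quiver.Hom.op (V := VCat S) f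

end VCat

namespace B3

variable {C : Type u} [Category.{v} C] [MonoidalCategory C] [SymmetricCategory C] (S : B3 C)

lemma exch_eq_tensorμ (A B X Y : C) : exch A B X Y = tensorμ A B X Y := by
  simp only [exch, tensorμ, id_tensorHom, tensorHom_id]

@[simps]
def wedgeCopyDiscard : CopyDiscard C where
  copy := S.Δ
  discard := S.Pi
  copy_assoc X := by simpa using (S.coassoc X).symm
  copy_comm := S.cocomm
  copy_discard_left X := by simpa [← cancel_mono (λ_ X).hom] using S.counit_l X
  copy_discard_right X := by simpa [← cancel_mono (ρ_ X).hom] using S.counit_r X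
  discard_unit := S.B2a
  copy_tensor X Y := by rw [S.B2c, exch_eq_tensorμ]

def veeCopyDiscard : CopyDiscard (VCat S.toVStr)ᵒᵖ where
  copy X := VCat.opHom S.toVStr (S.nab X.unop)
  discard X := VCat.opHom S.toVStr (S.cap X.unop)
  copy_assoc X := Quiver.Hom.unop_inj <|
    ((Iso.eq_inv_comp _).2 (S.vcoassoc X.unop)).trans (Category.assoc _ _ _).symm
  copy_comm X := Quiver.Hom.unop_inj (S.vcomm X.unop)
  copy_discard_left X := Quiver.Hom.unop_inj <|
    ((Iso.inv_comp_eq _).1 (S.vunit_l X.unop)).trans (Category.comp_id _)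
  copy_discard_right X := Quiver.Hom.unop_inj <|
    ((Iso.inv_comp_eq _).1 (S.vunit_r X.unop)).trans (Category.comp_id _)
  discard_unit := Quiver.Hom.unop_inj S.B2a'
  copy_tensor X Y := Quiver.Hom.unop_inj <|
    (S.B2c' X.unop Y.unop).trans (congrArg (· ≫ _) (unop_tensorμ X Y X Y).symm)

lemma deterministic_opHom_iff {A B : C} (f : A ⟶ B) :
    S.veeCopyDiscard.Deterministic (VCat.opHom S.toVStr f) ↔
      S.cap A ≫ f = S.cap B ∧ S.nab A ≫ f = S.vHom f f ≫ S.nab B :=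
  ⟨fun h => ⟨congrArg Quiver.Hom.unop h.comp_discard, congrArg Quiver.Hom.unop h.comp_copy⟩,
    fun h => ⟨congrArg Quiver.Hom.op h.1, congrArg Quiver.Hom.op h.2⟩⟩

lemma strong_iff {A B : C} (f : A ⟶ B) :
    S.Strong f ↔ S.wedgeCopyDiscard.Deterministic f ∧
      S.veeCopyDiscard.Deterministic (VCat.opHom S.toVStr f) := by
  rw [deterministic_opHom_iff]
  exact ⟨fun ⟨h₁, h₂, h₃, h₄⟩ => ⟨⟨h₃, h₄⟩, h₂, h₁⟩, fun ⟨⟨h₃, h₄⟩, h₂, h₁⟩ => ⟨h₁, h₂, h₃, h₄⟩⟩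

variable {S}

lemma deterministic_vHom {A A' B B' : C} {f : A ⟶ A'} {g : B ⟶ B'}
    (hf : S.wedgeCopyDiscard.Deterministic f) (hg : S.wedgeCopyDiscard.Deterministic g) :
    S.wedgeCopyDiscard.Deterministic (S.vHom f g) where
  comp_discard := by
    have hf := hf.comp_discard
    have hg := hg.comp_discard
    simp only [wedgeCopyDiscard_discard] at hf hg ⊢
    rw [S.B3b, S.B3b, ← Category.assoc, ← S.vHom_comp, hf, hg]
  comp_copy := by
    have hf := hf.comp_copy
    have hg := hg.comp_copy
    simp only [wedgeCopyDiscard_copy] at hf hg ⊢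
    rw [S.B3c, S.B3c, ← Category.assoc, ← S.vHom_comp, hf, hg, S.vHom_comp, Category.assoc,
      Category.assoc, S.med_nat]

lemma deterministic_opHom_tensorHom {A A' B B' : C} {f : A ⟶ A'} {g : B ⟶ B'}
    (hf : S.veeCopyDiscard.Deterministic (VCat.opHom S.toVStr f))
    (hg : S.veeCopyDiscard.Deterministic (VCat.opHom S.toVStr g)) :
    S.veeCopyDiscard.Deterministic (VCat.opHom S.toVStr (f ⊗ₘ g)) := by
  rw [deterministic_opHom_iff] at hf hg ⊢
  constructor
  · rw [S.B3b', S.B3b', Category.assoc, tensorHom_comp_tensorHom, hf.1, hg.1]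
  · rw [S.B3c', S.B3c', Category.assoc, tensorHom_comp_tensorHom, hf.2, hg.2,
      reassoc_of% S.med_nat f g f g, tensorHom_comp_tensorHom]

variable (S)

lemma med_eq_lift (A B X Y : C) :
    S.med A B X Y = S.wedgeCopyDiscard.lift
      (S.vHom (S.wedgeCopyDiscard.fst A B) (S.wedgeCopyDiscard.fst X Y))
      (S.vHom (S.wedgeCopyDiscard.snd A B) (S.wedgeCopyDiscard.snd X Y)) := by
  have h := S.wedgeCopyDiscard.lift_fst_snd
  simp only [CopyDiscard.lift, wedgeCopyDiscard_copy] at h ⊢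
  rw [S.B3c, Category.assoc, ← S.med_nat, ← Category.assoc, ← S.vHom_comp, h, h, S.vHom_id,
    Category.id_comp]

def inl (A X : C) : A ⟶ S.vee A X := (S.vrunit A).inv ≫ S.vHom (𝟙 A) (S.cap X)

def inr (A X : C) : X ⟶ S.vee A X := (S.vlunit X).inv ≫ S.vHom (S.cap A) (𝟙 X)

lemma opHom_inl (A X : C) :
    VCat.opHom S.toVStr (S.inl A X) = S.veeCopyDiscard.fst (op A) (op X) := rfl

lemma opHom_inr (A X : C) :
    VCat.opHom S.toVStr (S.inr A X) = S.veeCopyDiscard.snd (op A) (op X) := rfl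

lemma med_eq_vHom_comp_nab (A B X Y : C) :
    S.med A B X Y =
      S.vHom (S.inl A X ⊗ₘ S.inl B Y) (S.inr A X ⊗ₘ S.inr B Y) ≫ S.nab (S.vee A X ⊗ S.vee B Y) := by
  have h (A X : C) : S.vHom (S.inl A X) (S.inr A X) ≫ S.nab (S.vee A X) = 𝟙 _ :=
    congrArg Quiver.Hom.unop (S.veeCopyDiscard.lift_fst_snd (op A) (op X))
  rw [S.B3c', reassoc_of% S.med_nat, tensorHom_comp_tensorHom, h, h, id_tensorHom_id,
    Category.comp_id]

lemma strong_med (A B X Y : C) : S.Strong (S.med A B X Y) := by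
  refine (S.strong_iff _).2 ⟨?_, ?_⟩
  · rw [med_eq_lift]
    exact (deterministic_vHom (CopyDiscard.deterministic_fst _ A B)
      (CopyDiscard.deterministic_fst _ X Y)).lift
      (deterministic_vHom (CopyDiscard.deterministic_snd _ A B)
        (CopyDiscard.deterministic_snd _ X Y))
  · rw [med_eq_vHom_comp_nab]
    exact (deterministic_opHom_tensorHom (S.opHom_inl A X ▸ CopyDiscard.deterministic_fst _ _ _)
      (S.opHom_inl B Y ▸ CopyDiscard.deterministic_fst _ _ _)).lift
      (deterministic_opHom_tensorHom (S.opHom_inr A X ▸ CopyDiscard.deterministic_snd _ _ _)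
        (S.opHom_inr B Y ▸ CopyDiscard.deterministic_snd _ _ _))

lemma strong_nm : S.Strong S.nm := by
  refine (S.strong_iff _).2 ⟨?_, ?_⟩
  · have h : S.nm = S.Pi (S.vee (𝟙_ C) (𝟙_ C)) := by
      rw [S.B3b, S.B2a, S.vHom_id, Category.id_comp]
    rw [h]
    exact S.wedgeCopyDiscard.deterministic_discard _
  · rw [S.B3a]
    exact S.veeCopyDiscard.deterministic_copy (op (𝟙_ C))

variable {S}

lemma Strong.tensorHom {A A' B B' : C} {f : A ⟶ A'} {g : B ⟶ B'} (hf : S.Strong f)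
    (hg : S.Strong g) : S.Strong (f ⊗ₘ g) := by
  rw [strong_iff] at hf hg ⊢
  exact ⟨hf.1.tensorHom hg.1, deterministic_opHom_tensorHom hf.2 hg.2⟩

lemma Strong.vHom {A A' B B' : C} {f : A ⟶ A'} {g : B ⟶ B'} (hf : S.Strong f)
    (hg : S.Strong g) : S.Strong (S.vHom f g) := by
  rw [strong_iff] at hf hg ⊢
  exact ⟨deterministic_vHom hf.1 hg.1, hf.2.tensorHom hg.2⟩

end B3

/-- In a `B3`-category, the medial map and the nullary medial map are strong,
and the strong maps are closed under `∧` and `∨`. -/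
theorem stmt14 {C : Type u} [Category.{v} C] [MonoidalCategory C] [SymmetricCategory C]
    (S : B3 C) :
    (∀ A B X Y : C, S.Strong (S.med A B X Y)) ∧
    S.Strong S.nm ∧
    (∀ {A A' B B' : C} (f : A ⟶ A') (g : B ⟶ B'),
      S.Strong f → S.Strong g → S.Strong (f ⊗ₘ g)) ∧
    (∀ {A A' B B' : C} (f : A ⟶ A') (g : B ⟶ B'),
      S.Strong f → S.Strong g → S.Strong (S.vHom f g)) :=
  ⟨S.strong_med, S.strong_nm, fun _ _ hf hg => hf.tensorHom hg, fun _ _ hf hg => hf.vHom hg⟩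
end

section
/- In a B3-category, the two canonical maps e₁, e₂ : f → t defined from medial (e.g. e₁ = ρ_t ∘ (λ∨-unitors) ∘ m_{f,t,t,f} ∘ (ρ⁻¹∨λ⁻¹) ∘ λ_f⁻¹) both coincide with Π_f and with ⊓_t; in particular every B3-category is single-mixed: Π_f = ⊓_t : f → t. -/
/-! The counit laws write `ρ⁻¹` and `λ⁻¹` as `Δ` followed by a counit `Π`, and the unit laws
write the `∨`-unitors as a unit `⊓` followed by `∇`; in particular
`(⊓_A ∨ ⊓_A) ≫ ∇_A = vlunit_f ≫ ⊓_A` for every `A`. Expanding the unitors of `f` in `e₁`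
(or `e₂`) and pushing the counits through medial leaves
`(Δ_f ∨ Δ_f) ≫ m ≫ (∇_f ∧ ∇_f) = (Δ_f ∨ Δ_f) ≫ ∇_{f∧f}` (B3c'); as B3a' makes `Δ_f = ⊓_{f∧f}`,
this is `vlunit_f ≫ Δ_f`, and the counit law leaves `Π_f`.
Dually, expanding the unitors of `t` in `e₁` and pulling the units back through medial leaves
`(⊓_t ∨ ⊓_t) ≫ Δ_{t∨t} ≫ (∇_t ∧ ∇_t)` (B3c); as B3a makes `∇_t = Π_{t∨t}`, the counit law
reduces this to `(⊓_t ∨ ⊓_t) ≫ ∇_t = vlunit_f ≫ ⊓_t`. -/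

open CategoryTheory CategoryTheory.MonoidalCategory

universe v u

namespace B2

variable {C : Type u} [Category.{v} C] [MonoidalCategory C] [SymmetricCategory C] (S : B2 C)

lemma rightUnitor_inv_eq (A : C) : (ρ_ A).inv = S.Δ A ≫ (𝟙 A ⊗ₘ S.Pi A) := by
  rw [← cancel_mono (ρ_ A).hom, Category.assoc, S.counit_r, Iso.inv_hom_id]

lemma leftUnitor_inv_eq (A : C) : (λ_ A).inv = S.Δ A ≫ (S.Pi A ⊗ₘ 𝟙 A) := by
  rw [← cancel_mono (λ_ A).hom, Category.assoc, S.counit_l, Iso.inv_hom_id]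

lemma Δ_unit : S.Δ (𝟙_ C) = (ρ_ (𝟙_ C)).inv := by
  rw [rightUnitor_inv_eq, S.B2a, id_tensorHom_id, Category.comp_id]

lemma Δ_comp_Pi_tensorHom_Pi (A : C) :
    S.Δ A ≫ (S.Pi A ⊗ₘ S.Pi A) ≫ (ρ_ (𝟙_ C)).hom = S.Pi A := by
  have h := S.counit_r A
  rw [id_tensorHom] at h
  rw [tensorHom_def', Category.assoc, rightUnitor_naturality, reassoc_of% h]

lemma vlunit_hom_eq (A : C) : (S.vlunit A).hom = S.vHom (S.cap A) (𝟙 A) ≫ S.nab A :=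
  (((Iso.inv_comp_eq _).mp (S.vunit_l A)).trans (Category.comp_id _)).symm

lemma vrunit_hom_eq (A : C) : (S.vrunit A).hom = S.vHom (𝟙 A) (S.cap A) ≫ S.nab A :=
  (((Iso.inv_comp_eq _).mp (S.vunit_r A)).trans (Category.comp_id _)).symm

lemma nab_bot_eq_vlunit : S.nab S.bot = (S.vlunit S.bot).hom := by
  rw [vlunit_hom_eq, S.B2a', S.vHom_id, Category.id_comp]

lemma nab_bot_eq_vrunit : S.nab S.bot = (S.vrunit S.bot).hom := by
  rw [vrunit_hom_eq, S.B2a', S.vHom_id, Category.id_comp]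

lemma vHom_cap_cap_comp_nab (A : C) :
    S.vHom (S.cap A) (S.cap A) ≫ S.nab A = (S.vlunit S.bot).hom ≫ S.cap A := by
  rw [← S.vlunit_nat, vlunit_hom_eq, ← Category.assoc, ← S.vHom_comp, Category.id_comp,
    Category.comp_id]

end B2

namespace B3

variable {C : Type u} [Category.{v} C] [MonoidalCategory C] [SymmetricCategory C] (S : B3 C)

def e₁ : S.bot ⟶ 𝟙_ C :=
  (S.vlunit S.bot).inv ≫ S.vHom (ρ_ S.bot).inv (λ_ S.bot).inv ≫
    S.med S.bot (𝟙_ C) (𝟙_ C) S.bot ≫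
    ((S.vlunit (𝟙_ C)).hom ⊗ₘ (S.vrunit (𝟙_ C)).hom) ≫ (ρ_ (𝟙_ C)).hom

def e₂ : S.bot ⟶ 𝟙_ C :=
  (S.vlunit S.bot).inv ≫ S.vHom (λ_ S.bot).inv (ρ_ S.bot).inv ≫
    S.med (𝟙_ C) S.bot S.bot (𝟙_ C) ≫
    ((S.vrunit (𝟙_ C)).hom ⊗ₘ (S.vlunit (𝟙_ C)).hom) ≫ (ρ_ (𝟙_ C)).hom

lemma Pi_vee_unit : S.Pi (S.vee (𝟙_ C) (𝟙_ C)) = S.nab (𝟙_ C) := by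
  rw [S.B3b, S.B2a, S.vHom_id, Category.id_comp, S.B3a]

lemma cap_tensor_bot : S.cap (S.bot ⊗ S.bot) = S.Δ S.bot := by
  rw [S.B3b', S.B2a', id_tensorHom_id, Category.comp_id, S.B3a']

lemma vHom_Δ_med_nab_bot :
    S.vHom (S.Δ S.bot) (S.Δ S.bot) ≫ S.med S.bot S.bot S.bot S.bot ≫
      (S.nab S.bot ⊗ₘ S.nab S.bot) = (S.vlunit S.bot).hom ≫ S.Δ S.bot := by
  rw [← S.B3c', ← cap_tensor_bot, S.vHom_cap_cap_comp_nab]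

lemma vHom_cap_Δ_med_nab_unit :
    S.vHom (S.cap (𝟙_ C)) (S.cap (𝟙_ C)) ≫ S.vHom (S.Δ (𝟙_ C)) (S.Δ (𝟙_ C)) ≫
      S.med (𝟙_ C) (𝟙_ C) (𝟙_ C) (𝟙_ C) ≫ (S.nab (𝟙_ C) ⊗ₘ S.nab (𝟙_ C)) ≫
      (ρ_ (𝟙_ C)).hom = (S.vlunit S.bot).hom ≫ S.cap (𝟙_ C) := by
  rw [← reassoc_of% (S.B3c (𝟙_ C) (𝟙_ C)), ← Pi_vee_unit, S.Δ_comp_Pi_tensorHom_Pi, Pi_vee_unit,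
    S.vHom_cap_cap_comp_nab]

lemma e₁_eq_Pi : S.e₁ = S.Pi S.bot := by
  rw [e₁, S.rightUnitor_inv_eq, S.leftUnitor_inv_eq, S.vHom_comp, Category.assoc,
    reassoc_of% S.med_nat, tensorHom_comp_tensorHom_assoc, S.vlunit_nat, S.vrunit_nat,
    ← S.nab_bot_eq_vlunit, ← S.nab_bot_eq_vrunit, ← tensorHom_comp_tensorHom_assoc,
    reassoc_of% S.vHom_Δ_med_nab_bot, S.Δ_comp_Pi_tensorHom_Pi, Iso.inv_hom_id_assoc]

lemma e₂_eq_Pi : S.e₂ = S.Pi S.bot := by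
  rw [e₂, S.rightUnitor_inv_eq, S.leftUnitor_inv_eq, S.vHom_comp, Category.assoc,
    reassoc_of% S.med_nat, tensorHom_comp_tensorHom_assoc, S.vlunit_nat, S.vrunit_nat,
    ← S.nab_bot_eq_vlunit, ← S.nab_bot_eq_vrunit, ← tensorHom_comp_tensorHom_assoc,
    reassoc_of% S.vHom_Δ_med_nab_bot, S.Δ_comp_Pi_tensorHom_Pi, Iso.inv_hom_id_assoc]

lemma e₁_eq_cap : S.e₁ = S.cap (𝟙_ C) := by
  rw [e₁, S.vlunit_hom_eq (𝟙_ C), S.vrunit_hom_eq (𝟙_ C), ← tensorHom_comp_tensorHom_assoc,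
    ← reassoc_of% S.med_nat, ← reassoc_of% S.vHom_comp, tensorHom_id, id_tensorHom,
    ← rightUnitor_inv_naturality, ← leftUnitor_inv_naturality, S.vHom_comp, Category.assoc,
    unitors_inv_equal, ← S.Δ_unit, S.vHom_cap_Δ_med_nab_unit, Iso.inv_hom_id_assoc]

end B3

/-- In a `B3`-category, the two canonical maps `e₁ e₂ : f ⟶ t` defined from the
medial map both coincide with `Π_f` and with `⊓_t`; in particular every
`B3`-category is single-mixed: `Π_f = ⊓_t`. -/
theorem stmt15 {C : Type u} [Category.{v} C] [MonoidalCategory C] [SymmetricCategory C]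
    (S : B3 C) :
    S.Pi S.bot = S.cap (𝟙_ C) ∧
    ((S.vlunit S.bot).inv ≫ S.vHom (ρ_ S.bot).inv (λ_ S.bot).inv ≫
        S.med S.bot (𝟙_ C) (𝟙_ C) S.bot ≫
        ((S.vlunit (𝟙_ C)).hom ⊗ₘ (S.vrunit (𝟙_ C)).hom) ≫ (ρ_ (𝟙_ C)).hom
      = S.Pi S.bot) ∧
    ((S.vlunit S.bot).inv ≫ S.vHom (λ_ S.bot).inv (ρ_ S.bot).inv ≫
        S.med (𝟙_ C) S.bot S.bot (𝟙_ C) ≫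
        ((S.vrunit (𝟙_ C)).hom ⊗ₘ (S.vlunit (𝟙_ C)).hom) ≫ (ρ_ (𝟙_ C)).hom
      = S.Pi S.bot) :=
  ⟨S.e₁_eq_Pi.symm.trans S.e₁_eq_cap, S.e₁_eq_Pi, S.e₂_eq_Pi⟩
end
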